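/- arXiv:math/0507116 — 6 statements merged into one kernel-verified Lean document; each statement's English description precedes it below -/
import Mathlib

section
/- In a bicategory B, between any two unit structures (I, λ, ρ) and (I', λ', ρ') on the same object a there exists exactly one morphism of unit structures, and this unique morphism is an invertible 2-cell. (In particular, the category of unit structures on a is contractible: any two unit structures are uniquely isomorphic.) -/
open CategoryTheory CategoryTheory.Bicategory

/-- A unit structure `(I, λ, ρ)` on an object `a` of a bicategory `B`: an endo-1-cell
`I : a ⟶ a` together with natural families of invertible 2-cells `λ_f : I ≫ f ≅ f` and
`ρ_g : g ≫ I ≅ g`, satisfying the compatibility axiom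
`ρ_g ▷ f = α_{g,I,f} ≫ (g ◁ λ_f)`. -/
structure UnitStructure {B : Type*} [Bicategory B] (a : B) where
  I : a ⟶ a
  lam : ∀ (b : B) (f : a ⟶ b), I ≫ f ≅ f
  rho : ∀ (c : B) (g : c ⟶ a), g ≫ I ≅ g
  lam_natural : ∀ (b : B) (f f' : a ⟶ b) (θ : f ⟶ f'),
    (I ◁ θ) ≫ (lam b f').hom = (lam b f).hom ≫ θ
  rho_natural : ∀ (c : B) (g g' : c ⟶ a) (θ : g ⟶ g'),
    (θ ▷ I) ≫ (rho c g').hom = (rho c g).hom ≫ θ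
  compat : ∀ (c b : B) (g : c ⟶ a) (f : a ⟶ b),
    (rho c g).hom ▷ f = (α_ g I f).hom ≫ (g ◁ (lam b f).hom)

namespace UnitStructure
variable {B : Type*} [Bicategory B] {a : B} (U : UnitStructure a)

lemma cancel_left {b : B} {f g : a ⟶ b} {β γ : f ⟶ g}
    (h : U.I ◁ β = U.I ◁ γ) : β = γ := by
  have hβ := U.lam_natural b f g β
  have hγ := U.lam_natural b f g γ
  rw [h, hγ] at hβ
  exact ((cancel_epi (U.lam b f).hom).mp hβ).symm

lemma whiskerLeft_lam {b : B} (f : a ⟶ b) :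
    U.I ◁ (U.lam b f).hom = (α_ U.I U.I f).inv ≫ ((U.rho a U.I).hom ▷ f) := by
  rw [U.compat a b U.I f, Iso.inv_hom_id_assoc]

lemma whiskerRight_rho {c : B} (g : c ⟶ a) :
    g ◁ (U.lam a U.I).hom = (α_ g U.I U.I).inv ≫ ((U.rho c g).hom ▷ U.I) := by
  rw [U.compat c a g U.I, Iso.inv_hom_id_assoc]

lemma lam_comp {b' b : B} (h : a ⟶ b') (f : b' ⟶ b) :
    (α_ U.I h f).hom ≫ (U.lam b (h ≫ f)).hom = (U.lam b' h).hom ▷ f := by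
  apply U.cancel_left
  calc U.I ◁ ((α_ U.I h f).hom ≫ (U.lam b (h ≫ f)).hom)
      = ((U.I ◁ (α_ U.I h f).hom) ≫ (α_ U.I U.I (h ≫ f)).inv) ≫
          ((U.rho a U.I).hom ▷ (h ≫ f)) := by
        rw [Bicategory.whiskerLeft_comp, U.whiskerLeft_lam, Category.assoc]
    _ = ((α_ U.I (U.I ≫ h) f).inv ≫ ((α_ U.I U.I h).inv ▷ f) ≫
          (α_ (U.I ≫ U.I) h f).hom) ≫ ((U.rho a U.I).hom ▷ (h ≫ f)) := by
        congr 1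
        coherence
    _ = (α_ U.I (U.I ≫ h) f).inv ≫ (((α_ U.I U.I h).inv ≫ ((U.rho a U.I).hom ▷ h)) ▷ f) ≫
          (α_ U.I h f).hom := by
        rw [comp_whiskerRight, Category.assoc, Category.assoc, Category.assoc,
          associator_naturality_left]
    _ = U.I ◁ ((U.lam b' h).hom ▷ f) := by
        rw [← U.whiskerLeft_lam, ← whisker_assoc_symm]

lemma cancel_right (U : UnitStructure a) {c : B} {f g : c ⟶ a} {β γ : f ⟶ g}
    (h : β ▷ U.I = γ ▷ U.I) : β = γ := by
  have hβ := U.rho_natural c f g β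
  have hγ := U.rho_natural c f g γ
  rw [h, hγ] at hβ
  exact ((cancel_epi (U.rho c f).hom).mp hβ).symm

lemma rho_comp (U : UnitStructure a) {d c : B} (h : d ⟶ c) (g : c ⟶ a) :
    (α_ h g U.I).hom ≫ (h ◁ (U.rho c g).hom) = (U.rho d (h ≫ g)).hom := by
  apply U.cancel_right
  have e1 : (h ◁ (U.rho c g).hom) ▷ U.I =
      (α_ h (g ≫ U.I) U.I).hom ≫ (h ◁ (α_ g U.I U.I).hom) ≫ (α_ h g (U.I ≫ U.I)).inv ≫
        ((h ≫ g) ◁ (U.lam a U.I).hom) := by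
    have e0 := associator_naturality_middle h (U.rho c g).hom U.I
    rw [U.compat c a g U.I, Bicategory.whiskerLeft_comp,
      comp_whiskerLeft_symm h g (U.lam a U.I).hom] at e0
    refine (cancel_mono (α_ h g U.I).hom).mp ?_
    rw [e0]; simp [Category.assoc]
  have e2 : (α_ h g U.I).hom ▷ U.I ≫ (α_ h (g ≫ U.I) U.I).hom ≫
      (h ◁ (α_ g U.I U.I).hom) ≫ (α_ h g (U.I ≫ U.I)).inv = (α_ (h ≫ g) U.I U.I).hom := by
    coherence
  rw [comp_whiskerRight, e1, U.compat d a (h ≫ g) U.I, reassoc_of% e2]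

end UnitStructure

/-- A morphism of unit structures `(I, λ, ρ) → (I', λ', ρ')` on an object `a`: a 2-cell
`θ : I ⟶ I'` compatible with the left and right constraints. -/
def IsUnitStructureHom {B : Type*} [Bicategory B] {a : B}
    (U U' : UnitStructure a) (θ : U.I ⟶ U'.I) : Prop :=
  (∀ (b : B) (f : a ⟶ b), (θ ▷ f) ≫ (U'.lam b f).hom = (U.lam b f).hom) ∧
  (∀ (c : B) (g : c ⟶ a), (g ◁ θ) ≫ (U'.rho c g).hom = (U.rho c g).hom)

/-- **Unit structures are uniquely isomorphic:** between any two unit structures on the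
same object of a bicategory there is exactly one morphism of unit structures, and this
unique morphism is an invertible 2-cell.  In particular the category of unit structures
on a fixed object is contractible. -/
theorem unitStructure_contractible {B : Type*} [Bicategory B] {a : B}
    (U U' : UnitStructure a) :
    (∃! θ : U.I ⟶ U'.I, IsUnitStructureHom U U' θ) ∧
    (∀ θ : U.I ⟶ U'.I, IsUnitStructureHom U U' θ → IsIso θ) := by
  set θ : U.I ⟶ U'.I := (U'.rho a U.I).inv ≫ (U.lam a U'.I).hom with hθ
  have hom1 : ∀ (b : B) (f : a ⟶ b), (θ ▷ f) ≫ (U'.lam b f).hom = (U.lam b f).hom := by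
    intro b f
    refine (cancel_epi ((U'.rho a U.I).hom ▷ f)).mp ?_
    rw [← comp_whiskerRight_assoc, hθ, Iso.hom_inv_id_assoc, ← U.lam_comp U'.I f,
      Category.assoc, ← U.lam_natural b (U'.I ≫ f) f (U'.lam b f).hom,
      U'.compat a b U.I f]
    simp [Category.assoc]
  have hom2 : ∀ (c : B) (g : c ⟶ a), (g ◁ θ) ≫ (U'.rho c g).hom = (U.rho c g).hom := by
    intro c g
    refine (cancel_epi (g ◁ (U'.rho a U.I).hom)).mp ?_
    rw [← Bicategory.whiskerLeft_comp_assoc, hθ, Iso.hom_inv_id_assoc]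
    calc (g ◁ (U.lam a U'.I).hom) ≫ (U'.rho c g).hom
        = (α_ g U.I U'.I).inv ≫ ((U.rho c g).hom ▷ U'.I) ≫ (U'.rho c g).hom := by
          rw [U.compat c a g U'.I]; simp [Category.assoc]
      _ = (α_ g U.I U'.I).inv ≫ (U'.rho c (g ≫ U.I)).hom ≫ (U.rho c g).hom := by
          rw [U'.rho_natural c (g ≫ U.I) g (U.rho c g).hom]
      _ = (g ◁ (U'.rho a U.I).hom) ≫ (U.rho c g).hom := by
          rw [← U'.rho_comp g U.I]; simp [Category.assoc]
  have hhom : IsUnitStructureHom U U' θ := ⟨hom1, hom2⟩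
  have key : ∀ z, IsUnitStructureHom U U' z →
      z = (U.lam a U.I).inv ≫ (U.rho a U.I).hom ≫ (U'.rho a U.I).inv ≫ (U.lam a U'.I).hom := by
    intro z hz
    have n := U.lam_natural a U.I U'.I z
    have hz2 : U.I ◁ z = (U.rho a U.I).hom ≫ (U'.rho a U.I).inv := by
      rw [← hz.2 a U.I]; simp
    rw [hz2] at n
    rw [← cancel_epi (U.lam a U.I).hom, ← n]
    simp [Category.assoc]
  have huniq : ∀ y, IsUnitStructureHom U U' y → y = θ := by
    intro y hy
    rw [key y hy, key θ hhom]
  refine ⟨⟨θ, hhom, huniq⟩, ?_⟩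
  intro t ht
  rw [huniq t ht, hθ]
  infer_instance
end

section
/- Let C be a monoidal category, let I be an object of C equipped with an isomorphism α : I ⊗ I ≅ I, and suppose the functor X ↦ I ⊗ X (tensoring with I on the left) is fully faithful. Then for every object X there exists a unique morphism λ_X : I ⊗ X ⟶ X such that 𝟙_I ⊗ λ_X = (associator I I X).inv ≫ (α.hom ⊗ 𝟙_X) as morphisms I ⊗ (I ⊗ X) ⟶ I ⊗ X; moreover each λ_X is an isomorphism, and the family λ is natural in X (for every h : X ⟶ Y, (𝟙_I ⊗ h) ≫ λ_Y = λ_X ≫ h). -/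
open CategoryTheory CategoryTheory.MonoidalCategory

/-- **Construction of left constraints from a Saavedra-style unit datum.**
Let `C` be a monoidal category, `I` an object with an isomorphism `α : I ⊗ I ≅ I`, such
that tensoring with `I` on the left is fully faithful.  Then for every `X` there is a
unique `λ_X : I ⊗ X ⟶ X` with `𝟙 I ⊗ λ_X = (α_ I I X).inv ≫ (α.hom ⊗ 𝟙 X)`; moreover
each `λ_X` is an isomorphism and the family `λ` is natural in `X`. -/
theorem saavedra_left_constraints {C : Type*} [Category C] [MonoidalCategory C]
    (I : C) (α : I ⊗ I ≅ I)
    (hff : ∀ X Y : C, Function.Bijective (fun f : X ⟶ Y => 𝟙 I ⊗ₘ f)) :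
    (∀ X : C, ∃! l : I ⊗ X ⟶ X, 𝟙 I ⊗ₘ l = (α_ I I X).inv ≫ (α.hom ⊗ₘ 𝟙 X)) ∧
    (∀ (X : C) (l : I ⊗ X ⟶ X),
      𝟙 I ⊗ₘ l = (α_ I I X).inv ≫ (α.hom ⊗ₘ 𝟙 X) → IsIso l) ∧
    (∀ (X Y : C) (h : X ⟶ Y) (lX : I ⊗ X ⟶ X) (lY : I ⊗ Y ⟶ Y),
      𝟙 I ⊗ₘ lX = (α_ I I X).inv ≫ (α.hom ⊗ₘ 𝟙 X) →
      𝟙 I ⊗ₘ lY = (α_ I I Y).inv ≫ (α.hom ⊗ₘ 𝟙 Y) →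
      (𝟙 I ⊗ₘ h) ≫ lY = lX ≫ h) := by
  have inj : ∀ {X Y : C} (f g : X ⟶ Y), 𝟙 I ⊗ₘ f = 𝟙 I ⊗ₘ g → f = g := by
    intro X Y f g h
    exact (hff X Y).1 h
  refine ⟨?_, ?_, ?_⟩
  · intro X
    obtain ⟨l, hl⟩ := (hff (I ⊗ X) X).2 ((α_ I I X).inv ≫ (α.hom ⊗ₘ 𝟙 X))
    exact ⟨l, hl, fun l' hl' => inj l' l (hl'.trans hl.symm)⟩
  · intro X l hl
    have hiso : IsIso (𝟙 I ⊗ₘ l) := by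
      rw [hl]; infer_instance
    obtain ⟨g, hg⟩ := (hff X (I ⊗ X)).2 (inv (𝟙 I ⊗ₘ l))
    dsimp only at hg
    refine ⟨g, inj _ _ ?_, inj _ _ ?_⟩
    · rw [id_tensor_comp, hg, IsIso.hom_inv_id, id_tensorHom_id]
    · rw [id_tensor_comp, hg, IsIso.inv_hom_id, id_tensorHom_id]
  · intro X Y h lX lY hX hY
    apply inj
    rw [id_tensor_comp, id_tensor_comp, hX, hY]
    simp only [id_tensorHom, tensorHom_id]
    rw [associator_inv_naturality_right_assoc, whisker_exchange]
    simp
end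

section
/- Let C be a monoidal category and let I be an object of C such that there exists an isomorphism α : I ⊗ I ≅ I and the functor X ↦ I ⊗ X (tensoring with I on the left) is fully faithful. Then I is isomorphic to the monoidal unit object 𝟙 of C. -/
open CategoryTheory CategoryTheory.MonoidalCategory

/-- **A Saavedra unit is isomorphic to the monoidal unit.**  If `I` is an object of a
monoidal category `C` such that there exists an isomorphism `I ⊗ I ≅ I` and tensoring
with `I` on the left is fully faithful, then `I ≅ 𝟙_ C`. -/
theorem saavedra_unit_iso_unit {C : Type*} [Category C] [MonoidalCategory C]
    (I : C) (hα : Nonempty (I ⊗ I ≅ I))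
    (hff : ∀ X Y : C, Function.Bijective (fun f : X ⟶ Y => 𝟙 I ⊗ₘ f)) :
    Nonempty (I ≅ 𝟙_ C) := by
  obtain ⟨α⟩ := hα
  obtain ⟨f, hf⟩ := (hff I (𝟙_ C)).2 (α.hom ≫ (ρ_ I).inv)
  obtain ⟨g, hg⟩ := (hff (𝟙_ C) I).2 ((ρ_ I).hom ≫ α.inv)
  simp only [MonoidalCategory.id_tensorHom] at hf hg
  refine ⟨⟨f, g, ?_, ?_⟩⟩
  · apply (hff I I).1
    beta_reduce
    rw [MonoidalCategory.id_tensorHom, MonoidalCategory.whiskerLeft_comp, hf, hg]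
    simp
  · apply (hff (𝟙_ C) (𝟙_ C)).1
    beta_reduce
    rw [MonoidalCategory.id_tensorHom, MonoidalCategory.whiskerLeft_comp, hg, hf]
    simp
end

section
/- Let X : ∇ᵒᵖ → Set be a fair Set-category. Let p denote the point object of ∇ (the identity of [0]) and let w denote the object given by the unique epimorphism η : [1] ↠ [0]. Let i₀, i₁ : p → w be the two morphisms of ∇ given by the squares whose top components are the two coface monomorphisms δ¹, δ⁰ : [0] → [1] and whose bottom component is the identity of [0]. Then X(i₀) = X(i₁) as maps X(w) → X(p); that is, the source and target maps from the set of weak identity arrows to the set of objects coincide, so weak identity arrows are endomorphisms. -/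
open CategoryTheory Simplicial

/-- An object of the fat delta `∇`: an epimorphism `e : [n] ↠ [m]` of the simplex category. -/
structure FatDeltaObj : Type where
  src : SimplexCategory
  tgt : SimplexCategory
  e : src ⟶ tgt
  epi : Epi e

/-- A morphism of the fat delta from `e : [n] ↠ [m]` to `e' : [n'] ↠ [m']`: a pair `(u, v)`
of morphisms of the simplex category with `u` a monomorphism and `e' ∘ u = v ∘ e`. -/
@[ext]
structure FatDeltaHom (A B : FatDeltaObj) : Type where
  u : A.src ⟶ B.src
  v : A.tgt ⟶ B.tgt
  mono : Mono u
  comm : A.e ≫ v = u ≫ B.e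

/-- The fat delta category `∇`. -/
instance : Category FatDeltaObj where
  Hom := FatDeltaHom
  id A := ⟨𝟙 _, 𝟙 _, inferInstance, by simp⟩
  comp f g := ⟨f.u ≫ g.u, f.v ≫ g.v,
    by haveI := f.mono; haveI := g.mono; exact mono_comp _ _,
    by rw [← Category.assoc, f.comm, Category.assoc, g.comm, ← Category.assoc]⟩
  id_comp f := by apply FatDeltaHom.ext <;> apply Category.id_comp
  comp_id f := by apply FatDeltaHom.ext <;> apply Category.comp_id
  assoc f g h := by apply FatDeltaHom.ext <;> apply Category.assoc

/-- A morphism `(u, v)` of `∇` is vertical if its bottom component `v` is an identity. -/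
def IsVertical {A B : FatDeltaObj} (f : A ⟶ B) : Prop :=
  ∃ h : A.tgt = B.tgt, f.v = eqToHom h

/-- The point object of `∇`: the identity of `[0]`. -/
def FatDeltaObj.pt : FatDeltaObj :=
  ⟨⦋0⦌, ⦋0⦌, 𝟙 _, inferInstance⟩

/-- A functor `X : ∇ᵒᵖ → Set` is colour-preserving if it sends every vertical morphism
of `∇` to a bijection. -/
def ColourPreserving (X : FatDeltaObjᵒᵖ ⥤ Type) : Prop :=
  ∀ (A B : FatDeltaObj) (f : A ⟶ B), IsVertical f → Function.Bijective (X.map f.op)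

/-- A functor `X : ∇ᵒᵖ → Set` satisfies the strict Segal condition if it sends every
pushout square of `∇` whose initial corner is the point object to a pullback square
of sets. -/
def StrictSegal (X : FatDeltaObjᵒᵖ ⥤ Type) : Prop :=
  ∀ (A B P : FatDeltaObj) (f : FatDeltaObj.pt ⟶ A) (g : FatDeltaObj.pt ⟶ B)
    (inl : A ⟶ P) (inr : B ⟶ P), IsPushout f g inl inr →
      IsPullback (X.map inl.op) (X.map inr.op) (X.map f.op) (X.map g.op)

/-- The object `w` of `∇` given by the unique epimorphism `η : [1] ↠ [0]`. -/
def FatDeltaObj.w : FatDeltaObj :=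
  ⟨⦋1⦌, ⦋0⦌, SimplexCategory.σ 0, inferInstance⟩

/-- The morphism `pt → w` of `∇` whose top component is the coface monomorphism
`δ i : [0] → [1]` and whose bottom component is the identity of `[0]`. -/
def faceToW (i : Fin 2) : FatDeltaObj.pt ⟶ FatDeltaObj.w :=
  ⟨SimplexCategory.δ i, 𝟙 _, (inferInstance : Mono (SimplexCategory.δ (n := 0) i)),
    (SimplexCategory.hom_zero_zero _).trans (SimplexCategory.hom_zero_zero _).symm⟩


/-- Auxiliary object: the epimorphism `[2] ↠ [0]`. -/
def wwAux : FatDeltaObj :=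
  ⟨⦋2⦌, ⦋0⦌, SimplexCategory.σ 0 ≫ SimplexCategory.σ 0, epi_comp _ _⟩

/-- Auxiliary vertical morphisms `w ⟶ wwAux` with top component `δ k`. -/
def mWAux (k : Fin 3) : FatDeltaObj.w ⟶ wwAux :=
  ⟨SimplexCategory.δ k, 𝟙 _, (inferInstance : Mono (SimplexCategory.δ (n := 1) k)), by
    exact (SimplexCategory.eq_const_to_zero (FatDeltaObj.w.e ≫ 𝟙 _ : ⦋1⦌ ⟶ ⦋0⦌)).trans
      (SimplexCategory.eq_const_to_zero (SimplexCategory.δ k ≫ wwAux.e : ⦋1⦌ ⟶ ⦋0⦌)).symm⟩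

lemma mWAux_vertical (k : Fin 3) : IsVertical (mWAux k) := ⟨rfl, rfl⟩

lemma faceToW_vertical (i : Fin 2) : IsVertical (faceToW i) := ⟨rfl, rfl⟩

lemma comp_eq_of_u_eq {A B : FatDeltaObj} {f g : A ⟶ B}
    (h : f.u = g.u) (h' : f.v = g.v) : f = g := FatDeltaHom.ext h h'

/-- **Weak identity arrows are endomorphisms:** for any fair `Set`-category `X`, the source
and target maps `X(w) → X(pt)` (induced by the two morphisms `i₀, i₁ : pt → w` with top
components `δ¹, δ⁰ : [0] → [1]` and bottom component the identity) coincide. -/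
theorem fair_source_eq_target (X : FatDeltaObjᵒᵖ ⥤ Type)
    (hcolour : ColourPreserving X) (hsegal : StrictSegal X) :
    X.map (faceToW 1).op = X.map (faceToW 0).op := by
  -- three simplicial identities in ∇
  have e21 : faceToW 1 ≫ mWAux 2 = faceToW 1 ≫ mWAux 1 := by
    apply comp_eq_of_u_eq
    · exact SimplexCategory.δ_comp_δ (i := 1) (j := 1) le_rfl
    · rfl
  have e20 : faceToW 0 ≫ mWAux 2 = faceToW 1 ≫ mWAux 0 := by
    apply comp_eq_of_u_eq
    · exact SimplexCategory.δ_comp_δ (i := 0) (j := 1) (by decide)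
    · rfl
  have e10 : faceToW 0 ≫ mWAux 1 = faceToW 0 ≫ mWAux 0 := by
    apply comp_eq_of_u_eq
    · exact SimplexCategory.δ_comp_δ (i := 0) (j := 0) le_rfl
    · rfl
  have h1 := hcolour _ _ _ (faceToW_vertical 1)
  have h0 := hcolour _ _ _ (mWAux_vertical 0)
  -- apply X to the identities
  have E21 : X.map (mWAux 2).op ≫ X.map (faceToW 1).op
      = X.map (mWAux 1).op ≫ X.map (faceToW 1).op := by
    rw [← X.map_comp, ← X.map_comp, ← op_comp, ← op_comp, e21]
  have E20 : X.map (mWAux 2).op ≫ X.map (faceToW 0).op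
      = X.map (mWAux 0).op ≫ X.map (faceToW 1).op := by
    rw [← X.map_comp, ← X.map_comp, ← op_comp, ← op_comp, e20]
  have E10 : X.map (mWAux 1).op ≫ X.map (faceToW 0).op
      = X.map (mWAux 0).op ≫ X.map (faceToW 0).op := by
    rw [← X.map_comp, ← X.map_comp, ← op_comp, ← op_comp, e10]
  -- cancel the injective map X (faceToW 1) on the right of E21
  have D21 : X.map (mWAux 2).op = X.map (mWAux 1).op := by
    ext x
    apply h1.injective
    exact congrArg (fun f => f x) E21
  ext y
  obtain ⟨x, rfl⟩ := h0.surjective y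
  have := congrArg (fun f => f x) E20
  rw [D21] at this
  exact (this.symm.trans (congrArg (fun f => f x) E10))
end

section
/- Let X be a topological space and x ∈ X. Let T = {(s, t) ∈ ℝ × ℝ | 0 ≤ s ∧ s ≤ t ∧ t ≤ 1} with the subspace topology of ℝ², and let U(x) be the subspace of the space C(T, X) of continuous maps (with the compact-open topology) consisting of those f such that f(s, t) = x whenever s = 0 or s = t. Then U(x) is a contractible topological space (a contraction is given by (c, f) ↦ ((s,t) ↦ f(c·s, c·t)) for c ∈ [0,1]). -/
open scoped Topology

/-- The closed triangle `T` in `ℝ²` with vertices `(0,0)`, `(0,1)`, `(1,1)`, with the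
subspace topology. -/
def Triangle : Type :=
  { p : ℝ × ℝ // 0 ≤ p.1 ∧ p.1 ≤ p.2 ∧ p.2 ≤ 1 }

instance : TopologicalSpace Triangle :=
  inferInstanceAs (TopologicalSpace { p : ℝ × ℝ // 0 ≤ p.1 ∧ p.1 ≤ p.2 ∧ p.2 ≤ 1 })

/-- The space `U(x)` of null-homotopic loops at `x` together with a null-homotopy: the
subspace of `C(T, X)` (compact-open topology) of those maps sending the left side and
the hypotenuse of the triangle to `x`. -/
def NullHomotopicLoopsAt {X : Type*} [TopologicalSpace X] (x : X) : Type _ :=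
  { f : C(Triangle, X) // ∀ p : Triangle, p.val.1 = 0 ∨ p.val.1 = p.val.2 → f p = x }

instance {X : Type*} [TopologicalSpace X] (x : X) :
    TopologicalSpace (NullHomotopicLoopsAt x) :=
  inferInstanceAs (TopologicalSpace
    { f : C(Triangle, X) // ∀ p : Triangle, p.val.1 = 0 ∨ p.val.1 = p.val.2 → f p = x })

instance : T2Space Triangle :=
  inferInstanceAs (T2Space { p : ℝ × ℝ // 0 ≤ p.1 ∧ p.1 ≤ p.2 ∧ p.2 ≤ 1 })

instance : CompactSpace Triangle := by
  have : IsCompact {p : ℝ × ℝ | 0 ≤ p.1 ∧ p.1 ≤ p.2 ∧ p.2 ≤ 1} := by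
    apply Metric.isCompact_of_isClosed_isBounded
    · have : {p : ℝ × ℝ | 0 ≤ p.1 ∧ p.1 ≤ p.2 ∧ p.2 ≤ 1} =
        {p : ℝ × ℝ | 0 ≤ p.1} ∩ ({p | p.1 ≤ p.2} ∩ {p | p.2 ≤ 1}) := by
        ext p; simp [and_assoc]
      rw [this]
      exact (isClosed_le continuous_const continuous_fst).inter
        ((isClosed_le continuous_fst continuous_snd).inter
          (isClosed_le continuous_snd continuous_const))
    · apply Bornology.IsBounded.subset (Metric.isBounded_Icc (0,0) (1,1))
      rintro ⟨a, b⟩ ⟨h1, h2, h3⟩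
      exact ⟨⟨h1, h1.trans h2⟩, ⟨h2.trans h3, h3⟩⟩
  exact isCompact_iff_compactSpace.mp this

instance : LocallyCompactSpace Triangle := inferInstance

open unitInterval in
def triScale (c : I) (p : Triangle) : Triangle :=
  ⟨(c * p.val.1, c * p.val.2),
    mul_nonneg c.2.1 p.2.1,
    mul_le_mul_of_nonneg_left p.2.2.1 c.2.1,
    mul_le_one₀ c.2.2 (p.2.1.trans p.2.2.1) p.2.2.2⟩

open unitInterval in
lemma triScale_cont : Continuous fun cp : I × Triangle => triScale cp.1 cp.2 := by
  apply Continuous.subtype_mk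
  have hc : Continuous fun cp : I × Triangle => (cp.1 : ℝ) :=
    continuous_subtype_val.comp continuous_fst
  have hp : Continuous fun cp : I × Triangle => cp.2.val :=
    continuous_subtype_val.comp continuous_snd
  exact (hc.mul (continuous_fst.comp hp)).prodMk (hc.mul (continuous_snd.comp hp))

open unitInterval in
def triH {X : Type*} [TopologicalSpace X] (x : X) :
    C(I × NullHomotopicLoopsAt x, NullHomotopicLoopsAt x) where
  toFun cf := ⟨(cf.2.val).comp ⟨fun p => triScale cf.1 p,
      triScale_cont.comp (Continuous.prodMk continuous_const continuous_id)⟩, by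
    intro p hp
    apply cf.2.2
    rcases hp with h | h
    · left; show (cf.1 : ℝ) * p.val.1 = 0; rw [h, mul_zero]
    · right; show (cf.1 : ℝ) * p.val.1 = (cf.1 : ℝ) * p.val.2; rw [h]⟩
  continuous_toFun := by
    apply Continuous.subtype_mk
    apply ContinuousMap.continuous_of_continuous_uncurry
    have h1 : Continuous fun q : (I × NullHomotopicLoopsAt x) × Triangle =>
        (q.1.2.val : C(Triangle, X)) :=
      (continuous_subtype_val.comp continuous_snd).comp continuous_fst
    have h2 : Continuous fun q : (I × NullHomotopicLoopsAt x) × Triangle =>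
        triScale q.1.1 q.2 :=
      triScale_cont.comp ((continuous_fst.comp continuous_fst).prodMk continuous_snd)
    exact ContinuousEval.continuous_eval.comp (h1.prodMk h2)

/-- **The space of weak-unit data is contractible:** for any topological space `X` and
`x ∈ X`, the space `U(x)` of null-homotopic loops at `x` equipped with a null-homotopy
is contractible. -/
theorem nullHomotopicLoopsAt_contractible {X : Type*} [TopologicalSpace X] (x : X) :
    ContractibleSpace (NullHomotopicLoopsAt x) := by
  set u₀ : NullHomotopicLoopsAt x := ⟨ContinuousMap.const _ x, fun p _ => rfl⟩ with hu₀
  have hnull : (ContinuousMap.id (NullHomotopicLoopsAt x)).Nullhomotopic := by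
    refine ⟨u₀, ⟨(⟨triH x, ?_, ?_⟩ : ContinuousMap.Homotopy _ _).symm⟩⟩
    · intro f
      apply Subtype.ext
      ext p
      show f.val (triScale 0 p) = x
      apply f.2
      left; simp [triScale]
    · intro f
      apply Subtype.ext
      ext p
      show f.val (triScale 1 p) = f.val p
      congr 1
      apply Subtype.ext
      simp [triScale]
  exact (contractible_iff_id_nullhomotopic _).mpr hnull
end

section
/- The components functor on semisimplicial sets does not preserve binary products: let Δ_mono denote the wide subcategory of the simplex category Δ whose morphisms are the monomorphisms, and let X : Δ_monoᵒᵖ → Set be the functor with X([0]) a two-element set {a, b}, X([1]) a one-element set, X([n]) = ∅ for all n ≥ 2, where the two face maps X([1]) → X([0]) send the unique element to a and to b respectively. Then the canonical map colim(X × X) → (colim X) × (colim X) is not a bijection (colim X is a singleton while colim(X × X) has three elements). -/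
open CategoryTheory CategoryTheory.Limits Simplicial

/-- `Δ_mono`: the wide subcategory of the simplex category whose morphisms are the
monomorphisms. -/
structure DeltaMono : Type where
  obj : SimplexCategory

instance : Category DeltaMono where
  Hom A B := { f : A.obj ⟶ B.obj // Mono f }
  id A := ⟨𝟙 A.obj, inferInstance⟩
  comp f g := ⟨f.val ≫ g.val, by haveI := f.prop; haveI := g.prop; exact mono_comp _ _⟩
  id_comp f := Subtype.ext (Category.id_comp f.val)
  comp_id f := Subtype.ext (Category.comp_id f.val)
  assoc f g h := Subtype.ext (Category.assoc f.val g.val h.val)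

/-- The coface map `δ i : [0] → [1]`, as a morphism of `Δ_mono`. -/
def DeltaMono.delta (i : Fin 2) : DeltaMono.mk ⦋0⦌ ⟶ DeltaMono.mk ⦋1⦌ :=
  ⟨SimplexCategory.δ i, inferInstance⟩

/-- The objectwise (pointwise) product of two semisimplicial sets. -/
@[simps]
def ssPointwiseProd (X Y : DeltaMonoᵒᵖ ⥤ Type) : DeltaMonoᵒᵖ ⥤ Type where
  obj n := X.obj n × Y.obj n
  map f := TypeCat.ofHom (fun p => (X.map f p.1, Y.map f p.2))
  map_id n := by ext p <;> simp
  map_comp f g := by ext p <;> simp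

/-- The first projection, as a natural transformation. -/
def ssProdFst (X Y : DeltaMonoᵒᵖ ⥤ Type) : ssPointwiseProd X Y ⟶ X where
  app n := TypeCat.ofHom (fun p => p.1)
  naturality _ _ _ := rfl

/-- The second projection, as a natural transformation. -/
def ssProdSnd (X Y : DeltaMonoᵒᵖ ⥤ Type) : ssPointwiseProd X Y ⟶ Y where
  app n := TypeCat.ofHom (fun p => p.2)
  naturality _ _ _ := rfl

lemma DeltaMono.eq_op_mk (A : DeltaMonoᵒᵖ) :
    A = Opposite.op (DeltaMono.mk ⦋A.unop.obj.len⦌) := by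
  rw [SimplexCategory.mk_len]

open Classical in
/-- An invariant distinguishing the components of `(a,b)` and `(b,a)` in `X × X`. -/
noncomputable def ssClassify (X : DeltaMonoᵒᵖ ⥤ Type)
    (a b : X.obj (Opposite.op (DeltaMono.mk ⦋0⦌)))
    (A : DeltaMonoᵒᵖ) (p : (ssPointwiseProd X X).obj A) : ℕ :=
  if h : A = Opposite.op (DeltaMono.mk ⦋0⦌) then
    let q := cast (congrArg (ssPointwiseProd X X).obj h) p
    if q = (a, b) then 0 else if q = (b, a) then 1 else 2
  else 2

lemma ssClassify_nat (X : DeltaMonoᵒᵖ ⥤ Type)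
    (a b : X.obj (Opposite.op (DeltaMono.mk ⦋0⦌))) (hab : a ≠ b)
    (hone : ∃ u : X.obj (Opposite.op (DeltaMono.mk ⦋1⦌)), ∀ v, v = u)
    (hempty : ∀ n : ℕ, 2 ≤ n → IsEmpty (X.obj (Opposite.op (DeltaMono.mk ⦋n⦌))))
    {A B : DeltaMonoᵒᵖ} (f : A ⟶ B) (p : (ssPointwiseProd X X).obj A) :
    ssClassify X a b B ((ssPointwiseProd X X).map f p) = ssClassify X a b A p := by
  classical
  by_cases hA : A = Opposite.op (DeltaMono.mk ⦋0⦌)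
  · subst hA
    -- the target is also `[0]`, and `f` is the identity
    have hlen : B.unop.obj.len = 0 := by
      have := @SimplexCategory.len_le_of_mono _ _ f.unop.val f.unop.prop
      simpa using this
    have hB : B = Opposite.op (DeltaMono.mk ⦋0⦌) := by
      have := DeltaMono.eq_op_mk B
      rw [hlen] at this
      exact this
    subst hB
    have hf : f = 𝟙 _ := by
      have h1 : f.unop.val = 𝟙 (⦋0⦌ : SimplexCategory) :=
        SimplexCategory.hom_zero_zero _
      have h2 : f.unop = 𝟙 (DeltaMono.mk ⦋0⦌) := Subtype.ext h1
      calc f = f.unop.op := rfl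
        _ = (𝟙 (DeltaMono.mk ⦋0⦌)).op := by rw [h2]
        _ = 𝟙 _ := rfl
    rw [hf, CategoryTheory.Functor.map_id]
    rfl
  · simp only [ssClassify]
    rw [dif_neg hA]
    by_cases hB : B = Opposite.op (DeltaMono.mk ⦋0⦌)
    · subst hB
      rw [dif_pos rfl]
      have hAe := DeltaMono.eq_op_mk A
      -- analyze the level of `A`
      rcases hn : A.unop.obj.len with _ | _ | n
      · rw [hn] at hAe; exact absurd hAe hA
      · rw [hn] at hAe
        subst hAe
        obtain ⟨u, hu⟩ := hone
        have hp : p.1 = p.2 := (hu p.1).trans (hu p.2).symm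
        simp only [cast_eq]
        have h1 : ((ssPointwiseProd X X).map f p) ≠ (a, b) := by
          intro h
          apply hab
          have e1 : X.map f p.1 = a := congrArg Prod.fst h
          have e2 : X.map f p.2 = b := congrArg Prod.snd h
          rw [← e1, ← e2, hp]
        have h2 : ((ssPointwiseProd X X).map f p) ≠ (b, a) := by
          intro h
          apply hab
          have e1 : X.map f p.1 = b := congrArg Prod.fst h
          have e2 : X.map f p.2 = a := congrArg Prod.snd h
          rw [← e1, ← e2, hp]
        rw [if_neg h1, if_neg h2]
      · rw [hn] at hAe
        subst hAe
        exact ((hempty (n + 2) (by omega)).false p.1).elim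
    · rw [dif_neg hB]

/-- The cocone on `X × X` given by `ssClassify`. -/
noncomputable def ssClassifyCocone (X : DeltaMonoᵒᵖ ⥤ Type)
    (a b : X.obj (Opposite.op (DeltaMono.mk ⦋0⦌))) (hab : a ≠ b)
    (hone : ∃ u : X.obj (Opposite.op (DeltaMono.mk ⦋1⦌)), ∀ v, v = u)
    (hempty : ∀ n : ℕ, 2 ≤ n → IsEmpty (X.obj (Opposite.op (DeltaMono.mk ⦋n⦌)))) :
    Cocone (ssPointwiseProd X X) where
  pt := ℕ
  ι :=
    { app := fun A => TypeCat.ofHom (ssClassify X a b A)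
      naturality := by
        intro A B f
        ext p
        exact ssClassify_nat X a b hab hone hempty f p }

/-- **The components functor on semisimplicial sets does not preserve binary products.**
If `X : Δ_monoᵒᵖ → Set` has `X([0])` a two-element set `{a, b}`, `X([1])` a singleton,
`X([n]) = ∅` for `n ≥ 2`, and the two face maps `X([1]) → X([0])` send the unique element
to `a` and to `b` respectively, then the canonical map
`colim (X × X) → colim X × colim X` is not a bijection. -/
theorem colimit_semisimplicial_prod_not_bijective (X : DeltaMonoᵒᵖ ⥤ Type)
    (a b : X.obj (Opposite.op (DeltaMono.mk ⦋0⦌))) (hab : a ≠ b)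
    (htwo : ∀ c : X.obj (Opposite.op (DeltaMono.mk ⦋0⦌)), c = a ∨ c = b)
    (hone : ∃ u : X.obj (Opposite.op (DeltaMono.mk ⦋1⦌)), ∀ v, v = u)
    (hempty : ∀ n : ℕ, 2 ≤ n → IsEmpty (X.obj (Opposite.op (DeltaMono.mk ⦋n⦌))))
    (hface : ∀ u : X.obj (Opposite.op (DeltaMono.mk ⦋1⦌)),
      X.map (DeltaMono.delta 1).op u = a ∧ X.map (DeltaMono.delta 0).op u = b) :
    ¬ Function.Bijective (fun z : colimit (ssPointwiseProd X X) =>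
      (colimMap (ssProdFst X X) z, colimMap (ssProdSnd X X) z)) := by
  classical
  intro hbij
  obtain ⟨u, hu⟩ := id hone
  have hw1 := ConcreteCategory.congr_hom (colimit.w X (DeltaMono.delta 1).op) u
  have hw2 := ConcreteCategory.congr_hom (colimit.w X (DeltaMono.delta 0).op) u
  simp only [types_comp_apply] at hw1 hw2
  have hab0 : colimit.ι X (Opposite.op (DeltaMono.mk ⦋0⦌)) a
      = colimit.ι X (Opposite.op (DeltaMono.mk ⦋0⦌)) b := by
    rw [← (hface u).1, ← (hface u).2]
    exact hw1.trans hw2.symm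
  have key : ∀ p : X.obj (Opposite.op (DeltaMono.mk ⦋0⦌)) × X.obj (Opposite.op (DeltaMono.mk ⦋0⦌)),
      (colimMap (ssProdFst X X)
          (colimit.ι (ssPointwiseProd X X) (Opposite.op (DeltaMono.mk ⦋0⦌)) p),
        colimMap (ssProdSnd X X)
          (colimit.ι (ssPointwiseProd X X) (Opposite.op (DeltaMono.mk ⦋0⦌)) p))
      = (colimit.ι X (Opposite.op (DeltaMono.mk ⦋0⦌)) p.1,
          colimit.ι X (Opposite.op (DeltaMono.mk ⦋0⦌)) p.2) := by
    intro p
    have e1 := ConcreteCategory.congr_hom (ι_colimMap (ssProdFst X X) (Opposite.op (DeltaMono.mk ⦋0⦌))) p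
    have e2 := ConcreteCategory.congr_hom (ι_colimMap (ssProdSnd X X) (Opposite.op (DeltaMono.mk ⦋0⦌))) p
    exact Prod.ext e1 e2
  have heq : colimit.ι (ssPointwiseProd X X) (Opposite.op (DeltaMono.mk ⦋0⦌)) (a, b)
      = colimit.ι (ssPointwiseProd X X) (Opposite.op (DeltaMono.mk ⦋0⦌)) (b, a) := by
    apply hbij.injective
    show (colimMap (ssProdFst X X) _, colimMap (ssProdSnd X X) _)
      = (colimMap (ssProdFst X X) _, colimMap (ssProdSnd X X) _)
    rw [key (a, b), key (b, a)]
    simp only [hab0]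
  have hdesc := congrArg
    (colimit.desc (ssPointwiseProd X X) (ssClassifyCocone X a b hab hone hempty)) heq
  have d1 := ConcreteCategory.congr_hom
    (colimit.ι_desc (ssClassifyCocone X a b hab hone hempty) (Opposite.op (DeltaMono.mk ⦋0⦌)))
    (show (ssPointwiseProd X X).obj (Opposite.op (DeltaMono.mk ⦋0⦌)) from (a, b))
  have d2 := ConcreteCategory.congr_hom
    (colimit.ι_desc (ssClassifyCocone X a b hab hone hempty) (Opposite.op (DeltaMono.mk ⦋0⦌)))
    (show (ssPointwiseProd X X).obj (Opposite.op (DeltaMono.mk ⦋0⦌)) from (b, a))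
  simp only [types_comp_apply] at d1 d2
  replace hdesc := d1.symm.trans (hdesc.trans d2)
  have c1 : (ssClassifyCocone X a b hab hone hempty).ι.app
      (Opposite.op (DeltaMono.mk ⦋0⦌)) (a, b) = (0 : ℕ) := by
    show ssClassify X a b _ _ = (0 : ℕ)
    unfold ssClassify
    rw [dif_pos rfl]
    erw [cast_eq]
    exact if_pos rfl
  have c2 : (ssClassifyCocone X a b hab hone hempty).ι.app
      (Opposite.op (DeltaMono.mk ⦋0⦌)) (b, a) = (1 : ℕ) := by
    show ssClassify X a b _ _ = (1 : ℕ)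
    unfold ssClassify
    rw [dif_pos rfl]
    erw [cast_eq]
    have hne : ((b, a) : X.obj (Opposite.op (DeltaMono.mk ⦋0⦌))
        × X.obj (Opposite.op (DeltaMono.mk ⦋0⦌))) ≠ (a, b) := by
      intro h
      first
        | exact hab (congrArg Prod.snd h)
        | exact hab (congrArg Prod.snd h).symm
    exact (if_neg hne).trans (if_pos rfl)
  rw [c1, c2] at hdesc
  exact Nat.zero_ne_one hdesc
end
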